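/- Local lower bound for the fundamental solution: set ρ_λ = √(λ d log λ / (λ² − 1)) and T_λ = min{(2Cλ^d)^{−2/α}, T}, where C = C(λ,α,d,T) is the constant in the estimate |J(t,x;τ,ξ)| ≤ C (t−τ)^{α/2} Γ^{λ}(t−τ,x−ξ) for the correction term J = Γ − Z. Then the fundamental solution Γ of L_t − ∂_t satisfies Γ(t,x;τ,ξ) ≥ (1/(2λ^d)) Γ^{1/λ}(t−τ, x−ξ) whenever 0 < t − τ ≤ T_λ and |x − ξ| ≤ ρ_λ √(t−τ). -/

import Mathlib

open MeasureTheory Real Set Filter Topology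

noncomputable section

abbrev Euc (d : ℕ) := EuclideanSpace ℝ (Fin d)

variable {d : ℕ}

/-- Partial derivative in direction `i`. -/
def pd (i : Fin d) (f : Euc d → ℝ) (x : Euc d) : ℝ :=
  fderiv ℝ f x (EuclideanSpace.single i 1)

/-- Second partial derivative `∂_i ∂_j`. -/
def pd2 (i j : Fin d) (f : Euc d → ℝ) (x : Euc d) : ℝ :=
  pd i (pd j f) x

/-- The parabolic operator `L_t`. -/
def Lop (a : ℝ → Euc d → Fin d → Fin d → ℝ) (b : ℝ → Euc d → Fin d → ℝ)
    (c : ℝ → Euc d → ℝ) (t : ℝ) (u : Euc d → ℝ) (x : Euc d) : ℝ :=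
  (1 / 2) * ∑ i, ∑ j, a t x i j * pd2 i j u x + ∑ i, b t x i * pd i u x + c t x * u x

/-- Gaussian heat kernel `Γ^μ(t,x)`. -/
def heatK (d : ℕ) (μ t : ℝ) (x : Euc d) : ℝ :=
  (2 * π * μ * t) ^ (-(d : ℝ) / 2) * Real.exp (-‖x‖ ^ 2 / (2 * μ * t))

def NonRapidInc (φ : Euc d → ℝ) : Prop :=
  ∀ δ > 0, ∃ M, ∀ x : Euc d, |φ x| * Real.exp (-δ * ‖x‖ ^ 2) ≤ M

def NonRapidIncUnif (τ T : ℝ) (f : ℝ → Euc d → ℝ) : Prop :=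
  ∀ δ > 0, ∃ M, ∀ t ∈ Icc τ T, ∀ x : Euc d, |f t x| * Real.exp (-δ * ‖x‖ ^ 2) ≤ M

def UnifHolder (T al : ℝ) (f : ℝ → Euc d → ℝ) : Prop :=
  ∃ K, ∀ t ∈ Icc 0 T, ∀ x y : Euc d, |f t x - f t y| ≤ K * ‖x - y‖ ^ al

def LocHolder (T al : ℝ) (f : ℝ → Euc d → ℝ) : Prop :=
  ∀ K : Set (Euc d), IsCompact K →
    ∃ C, ∀ t ∈ Icc 0 T, ∀ x ∈ K, ∀ y ∈ K, |f t x - f t y| ≤ C * ‖x - y‖ ^ al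

/-- Standing assumptions on the coefficients. -/
structure Coeffs (d : ℕ) (T lam al : ℝ) (a : ℝ → Euc d → Fin d → Fin d → ℝ)
    (b : ℝ → Euc d → Fin d → ℝ) (c : ℝ → Euc d → ℝ) : Prop where
  symm : ∀ t x i j, a t x i j = a t x j i
  meas_a : ∀ x i j, Measurable fun t => a t x i j
  meas_b : ∀ x i, Measurable fun t => b t x i
  meas_c : ∀ x, Measurable fun t => c t x
  coercive_lower : ∀ t ∈ Icc (0 : ℝ) T, ∀ x ξ : Euc d,
    lam⁻¹ * ‖ξ‖ ^ 2 ≤ ∑ i, ∑ j, a t x i j * ξ i * ξ j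
  coercive_upper : ∀ t ∈ Icc (0 : ℝ) T, ∀ x ξ : Euc d,
    ∑ i, ∑ j, a t x i j * ξ i * ξ j ≤ lam * ‖ξ‖ ^ 2
  bdd_a : ∀ t ∈ Icc (0 : ℝ) T, ∀ x, ∀ i j, |a t x i j| ≤ lam
  bdd_b : ∀ t ∈ Icc (0 : ℝ) T, ∀ x, ∀ i, |b t x i| ≤ lam
  bdd_c : ∀ t ∈ Icc (0 : ℝ) T, ∀ x, |c t x| ≤ lam
  holder_a : ∀ i j, UnifHolder T al fun t x => a t x i j
  holder_b : ∀ i, LocHolder T al fun t x => b t x i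
  holder_c : LocHolder T al c

/-- Fundamental solution of `L_t - ∂_t`. -/
structure IsFundSol (d : ℕ) (T : ℝ) (a : ℝ → Euc d → Fin d → Fin d → ℝ)
    (b : ℝ → Euc d → Fin d → ℝ) (c : ℝ → Euc d → ℝ)
    (Γ : ℝ → Euc d → ℝ → Euc d → ℝ) : Prop where
  smooth : ∀ τ ∈ Ico (0 : ℝ) T, ∀ ξ : Euc d, ∀ t ∈ Ioc τ T,
    ContDiff ℝ 2 fun x => Γ t x τ ξ
  meas : ∀ τ ∈ Ico (0 : ℝ) T, ∀ ξ x : Euc d,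
    Measurable (fun t => Γ t x τ ξ) ∧
    (∀ i, Measurable fun t => pd i (fun y => Γ t y τ ξ) x) ∧
    (∀ i j, Measurable fun t => pd2 i j (fun y => Γ t y τ ξ) x)
  eqn : ∀ τ ∈ Ico (0 : ℝ) T, ∀ ξ : Euc d, ∀ t₀ t : ℝ, τ < t₀ → t₀ ≤ t → t ≤ T → ∀ x,
    Γ t x τ ξ = Γ t₀ x τ ξ + ∫ s in t₀..t, Lop a b c s (fun y => Γ s y τ ξ) x
  init : ∀ τ ∈ Ico (0 : ℝ) T, ∀ ξ : Euc d, ∀ φ : Euc d → ℝ, Continuous φ → NonRapidInc φ →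
    Tendsto (fun p : ℝ × Euc d => ∫ y, Γ p.1 p.2 τ y * φ y)
      (𝓝[{p : ℝ × Euc d | τ < p.1}] (τ, ξ)) (𝓝 (φ ξ))

/-- Time-integrated coefficient matrix `A_{τ,t}(y)`. -/
def Amat (a : ℝ → Euc d → Fin d → Fin d → ℝ) (τ t : ℝ) (y : Euc d) :
    Matrix (Fin d) (Fin d) ℝ :=
  Matrix.of fun i j => ∫ s in τ..t, a s y i j

/-- Gaussian kernel with covariance matrix `A`. -/
def gaussK (d : ℕ) (A : Matrix (Fin d) (Fin d) ℝ) (x : Euc d) : ℝ :=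
  ((2 * π) ^ d * A.det) ^ (-(1 : ℝ) / 2) *
    Real.exp (-dotProduct (A⁻¹.mulVec fun i => x i) (fun i => x i) / 2)

/-- The parametrix `Z(t,x;τ,ξ)`. -/
def Zker (a : ℝ → Euc d → Fin d → Fin d → ℝ) (t : ℝ) (x : Euc d) (τ : ℝ) (ξ : Euc d) : ℝ :=
  gaussK d (Amat a τ t ξ) (x - ξ)

/-- The frozen operator `L_{t,y}`. -/
def Lfr (a : ℝ → Euc d → Fin d → Fin d → ℝ) (t : ℝ) (y : Euc d)
    (u : Euc d → ℝ) (x : Euc d) : ℝ :=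
  (1 / 2) * ∑ i, ∑ j, a t y i j * pd2 i j u x

/-- `H Z(t,x;τ,ξ) = (L_t - L_{t,ξ}) Z(t,x;τ,ξ)`. -/
def HZ (a : ℝ → Euc d → Fin d → Fin d → ℝ) (b : ℝ → Euc d → Fin d → ℝ)
    (c : ℝ → Euc d → ℝ) (t : ℝ) (x : Euc d) (τ : ℝ) (ξ : Euc d) : ℝ :=
  Lop a b c t (fun z => Zker a t z τ ξ) x - Lfr a t ξ (fun z => Zker a t z τ ξ) x

/-- Parametrix iterates: `HZiter a b c (k-1) = (H Z)_k`. -/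
def HZiter (a : ℝ → Euc d → Fin d → Fin d → ℝ) (b : ℝ → Euc d → Fin d → ℝ)
    (c : ℝ → Euc d → ℝ) : ℕ → ℝ → Euc d → ℝ → Euc d → ℝ
  | 0 => HZ a b c
  | k + 1 => fun t x τ ξ => ∫ s in τ..t, ∫ y, HZ a b c t x s y * HZiter a b c k s y τ ξ

/-- `Φ = Σ_{k≥1} (H Z)_k`. -/
def Phi (a : ℝ → Euc d → Fin d → Fin d → ℝ) (b : ℝ → Euc d → Fin d → ℝ)
    (c : ℝ → Euc d → ℝ) (t : ℝ) (x : Euc d) (τ : ℝ) (ξ : Euc d) : ℝ :=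
  ∑' k : ℕ, HZiter a b c k t x τ ξ

/-- Correction term `J`. -/
def Jker (a : ℝ → Euc d → Fin d → Fin d → ℝ) (b : ℝ → Euc d → Fin d → ℝ)
    (c : ℝ → Euc d → ℝ) (t : ℝ) (x : Euc d) (τ : ℝ) (ξ : Euc d) : ℝ :=
  ∫ s in τ..t, ∫ y, Zker a t x s y * Phi a b c s y τ ξ

/-- The fundamental solution constructed by the parametrix method: `Γ = Z + J`. -/
def Gpar (a : ℝ → Euc d → Fin d → Fin d → ℝ) (b : ℝ → Euc d → Fin d → ℝ)
    (c : ℝ → Euc d → ℝ) (t : ℝ) (x : Euc d) (τ : ℝ) (ξ : Euc d) : ℝ :=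
  Zker a t x τ ξ + Jker a b c t x τ ξ

/-! The frozen Gaussian `Z = Γ^heat(A_{τ,t}(ξ), x - ξ)` dominates `λ^{-d} Γ^{1/λ}`: coercivity
puts the spectrum of `A_{τ,t}(ξ)` in `[(t - τ)/λ, λ(t - τ)]`, which bounds both `det A` and
`⟨A⁻¹x, x⟩`.
On the cone `|x - ξ| ≤ ρ_λ √(t - τ)` the choice of `ρ_λ` gives `Γ^λ ≤ Γ^{1/λ}`, and for
`t - τ ≤ T_λ` the factor `C (t - τ)^{α/2}` is at most `(2λ^d)⁻¹`. Hence `|J| ≤ (2λ^d)⁻¹ Γ^{1/λ}`,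
half of the lower bound for `Z`. -/

open Matrix

section QuadraticForm

variable {n : Type*} [Fintype n] [DecidableEq n] {A : Matrix n n ℝ} {m M : ℝ}

lemma Matrix.IsHermitian.eigenvalues_mem_Icc (hA : A.IsHermitian)
    (hm : ∀ w, m * (w ⬝ᵥ w) ≤ w ⬝ᵥ (A *ᵥ w)) (hM : ∀ w, w ⬝ᵥ (A *ᵥ w) ≤ M * (w ⬝ᵥ w))
    (i : n) : hA.eigenvalues i ∈ Icc m M := by
  set v := hA.eigenvectorBasis i
  have hv : ⇑v ⬝ᵥ ⇑v = 1 := by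
    have h := EuclideanSpace.inner_eq_star_dotProduct v v
    rw [star_trivial] at h
    rw [← h, real_inner_self_eq_norm_sq, hA.eigenvectorBasis.orthonormal.1 i, one_pow]
  have he := hA.eigenvalues_eq i
  simp only [star_trivial, RCLike.re_to_real] at he
  rw [he]
  exact ⟨by simpa [hv] using hm v, by simpa [hv] using hM v⟩

lemma Matrix.IsHermitian.det_mem_Ioc (hA : A.IsHermitian) (hm0 : 0 < m)
    (hm : ∀ w, m * (w ⬝ᵥ w) ≤ w ⬝ᵥ (A *ᵥ w)) (hM : ∀ w, w ⬝ᵥ (A *ᵥ w) ≤ M * (w ⬝ᵥ w)) :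
    A.det ∈ Ioc 0 (M ^ Fintype.card n) := by
  have heig := hA.eigenvalues_mem_Icc hm hM
  have hpos : ∀ i, 0 < hA.eigenvalues i := fun i => hm0.trans_le (heig i).1
  rw [hA.det_eq_prod_eigenvalues]
  simp only [RCLike.ofReal_real_eq_id, id]
  refine ⟨Finset.prod_pos fun i _ => hpos i, ?_⟩
  calc ∏ i, hA.eigenvalues i ≤ ∏ _i : n, M :=
        Finset.prod_le_prod (fun i _ => (hpos i).le) fun i _ => (heig i).2
    _ = M ^ Fintype.card n := by simp

lemma dotProduct_inv_mulVec_le (hA : IsUnit A.det) (hm0 : 0 < m)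
    (hm : ∀ w, m * (w ⬝ᵥ w) ≤ w ⬝ᵥ (A *ᵥ w)) (v : n → ℝ) :
    (A⁻¹ *ᵥ v) ⬝ᵥ v ≤ (v ⬝ᵥ v) / m := by
  set u := A⁻¹ *ᵥ v
  have hAu : A *ᵥ u = v := by rw [mulVec_mulVec, mul_nonsing_inv _ hA, one_mulVec]
  have hcoer : m * (u ⬝ᵥ u) ≤ u ⬝ᵥ v := hAu ▸ hm u
  -- Cauchy–Schwarz: (u ⬝ v)² ≤ (u ⬝ u)(v ⬝ v) ≤ (u ⬝ v)(v ⬝ v) / m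
  have hCS : (u ⬝ᵥ v) ^ 2 ≤ (u ⬝ᵥ u) * (v ⬝ᵥ v) := by
    simpa [dotProduct, sq] using Finset.sum_mul_sq_le_sq_mul_sq Finset.univ u v
  have hvv : 0 ≤ v ⬝ᵥ v := dotProduct_self_star_nonneg v
  rw [le_div_iff₀ hm0]
  rcases le_or_gt (u ⬝ᵥ v) 0 with hq | hq
  · nlinarith
  · nlinarith [mul_le_mul_of_nonneg_right hcoer hvv, mul_le_mul_of_nonneg_left hCS hm0.le]

end QuadraticForm

lemma rpow_mul_exp_le_gaussK {A : Matrix (Fin d) (Fin d) ℝ} {m M : ℝ} (hA : A.IsHermitian)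
    (hm0 : 0 < m) (hM0 : 0 ≤ M) (hm : ∀ w, m * (w ⬝ᵥ w) ≤ w ⬝ᵥ (A *ᵥ w))
    (hM : ∀ w, w ⬝ᵥ (A *ᵥ w) ≤ M * (w ⬝ᵥ w)) (x : Euc d) :
    (2 * π * M) ^ (-(d : ℝ) / 2) * Real.exp (-‖x‖ ^ 2 / (2 * m)) ≤ gaussK d A x := by
  obtain ⟨hdet0, hdetM⟩ := hA.det_mem_Ioc hm0 hm hM
  rw [Fintype.card_fin] at hdetM
  have hx : ‖x‖ ^ 2 = ⇑x ⬝ᵥ ⇑x := by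
    rw [EuclideanSpace.real_norm_sq_eq]
    simp only [dotProduct, sq]
  have hq := dotProduct_inv_mulVec_le (isUnit_iff_ne_zero.2 hdet0.ne') hm0 hm x
  have hpre : (2 * π * M) ^ (-(d : ℝ) / 2) = ((2 * π) ^ d * M ^ d) ^ (-(1 : ℝ) / 2) := by
    rw [← mul_pow, ← Real.rpow_natCast, ← Real.rpow_mul (by positivity)]
    ring_nf
  rw [gaussK, hpre]
  gcongr ?_ * Real.exp ?_
  · exact Real.rpow_le_rpow_of_nonpos (by positivity) (by gcongr) (by norm_num)
  · rw [hx, neg_div, neg_div, neg_le_neg_iff, div_le_div_iff₀ two_pos (by positivity)]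
    rw [le_div_iff₀ hm0] at hq
    change (A⁻¹ *ᵥ ⇑x) ⬝ᵥ ⇑x * (2 * m) ≤ _
    nlinarith

lemma heatK_nonneg {μ t : ℝ} (hμ : 0 ≤ μ) (ht : 0 ≤ t) (x : Euc d) : 0 ≤ heatK d μ t x :=
  mul_nonneg (Real.rpow_nonneg (by positivity) _) (Real.exp_pos _).le

lemma rpow_two_pi_mul_eq_inv_pow_mul {lam s : ℝ} (hlam : 0 < lam) (hs : 0 ≤ s) :
    (2 * π * lam * s) ^ (-(d : ℝ) / 2) = (lam ^ d)⁻¹ * (2 * π * lam⁻¹ * s) ^ (-(d : ℝ) / 2) := by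
  rw [show 2 * π * lam * s = lam ^ 2 * (2 * π * lam⁻¹ * s) by field_simp,
    Real.mul_rpow (by positivity) (by positivity), ← Real.rpow_natCast lam 2,
    ← Real.rpow_mul hlam.le, ← Real.rpow_natCast lam d, ← Real.rpow_neg hlam.le]
  congr 2
  push_cast; ring

lemma heatK_le_heatK_inv {lam s : ℝ} (hlam : 0 < lam) (hs : 0 < s) (x : Euc d)
    (hx : ‖x‖ ^ 2 * (lam ^ 2 - 1) ≤ 2 * lam * d * Real.log lam * s) :
    heatK d lam s x ≤ heatK d lam⁻¹ s x := by
  have hexp : Real.exp (-‖x‖ ^ 2 / (2 * lam * s))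
      ≤ lam ^ d * Real.exp (-‖x‖ ^ 2 / (2 * lam⁻¹ * s)) := by
    rw [← Real.exp_log (pow_pos hlam d), ← Real.exp_add, Real.log_pow]
    gcongr
    have hgap : d * Real.log lam + -‖x‖ ^ 2 / (2 * lam⁻¹ * s) - -‖x‖ ^ 2 / (2 * lam * s)
        = (2 * lam * d * Real.log lam * s - ‖x‖ ^ 2 * (lam ^ 2 - 1)) / (2 * lam * s) := by
      field_simp
      ring
    have : 0 ≤ (2 * lam * d * Real.log lam * s - ‖x‖ ^ 2 * (lam ^ 2 - 1)) / (2 * lam * s) :=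
      div_nonneg (by linarith) (by positivity)
    linarith
  rw [heatK, heatK, rpow_two_pi_mul_eq_inv_pow_mul hlam hs.le, mul_assoc]
  calc (lam ^ d)⁻¹ * ((2 * π * lam⁻¹ * s) ^ (-(d : ℝ) / 2) * Real.exp (-‖x‖ ^ 2 / (2 * lam * s)))
      ≤ (lam ^ d)⁻¹ * ((2 * π * lam⁻¹ * s) ^ (-(d : ℝ) / 2) *
          (lam ^ d * Real.exp (-‖x‖ ^ 2 / (2 * lam⁻¹ * s)))) := by gcongr
    _ = _ := by field_simp

lemma sq_mul_le_of_le_sqrt_mul_sqrt {lam s r : ℝ} (hlam : 1 < lam) (hs : 0 ≤ s) (hr : 0 ≤ r)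
    (h : r ≤ √(lam * d * Real.log lam / (lam ^ 2 - 1)) * √s) :
    r ^ 2 * (lam ^ 2 - 1) ≤ 2 * lam * d * Real.log lam * s := by
  have hlam2 : 0 < lam ^ 2 - 1 := by nlinarith
  have hlog : 0 ≤ d * Real.log lam := mul_nonneg d.cast_nonneg (Real.log_nonneg hlam.le)
  have hρ : 0 ≤ lam * d * Real.log lam / (lam ^ 2 - 1) :=
    div_nonneg (by rw [mul_assoc]; exact mul_nonneg (by linarith) hlog) hlam2.le
  have hr2 : r ^ 2 ≤ lam * d * Real.log lam / (lam ^ 2 - 1) * s := by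
    calc r ^ 2 ≤ (√(lam * d * Real.log lam / (lam ^ 2 - 1)) * √s) ^ 2 := by gcongr
      _ = _ := by rw [mul_pow, Real.sq_sqrt hρ, Real.sq_sqrt hs]
  have hgap : 0 ≤ lam * (d * Real.log lam) * s := mul_nonneg (mul_nonneg (by linarith) hlog) hs
  calc r ^ 2 * (lam ^ 2 - 1) ≤ lam * d * Real.log lam / (lam ^ 2 - 1) * s * (lam ^ 2 - 1) := by
        gcongr
    _ = lam * (d * Real.log lam) * s := by field_simp
    _ ≤ 2 * lam * d * Real.log lam * s := by linarith

lemma rpow_div_two_le_inv_of_le_rpow {K al s : ℝ} (hK : 0 < K) (hal : 0 < al) (hs : 0 ≤ s)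
    (h : s ≤ K ^ (-2 / al)) : s ^ (al / 2) ≤ K⁻¹ := by
  calc s ^ (al / 2) ≤ (K ^ (-2 / al)) ^ (al / 2) := by gcongr
    _ = K⁻¹ := by
      rw [← Real.rpow_mul hK.le, show -2 / al * (al / 2) = -1 by field_simp, Real.rpow_neg_one]

section Parametrix

variable {a : ℝ → Euc d → Fin d → Fin d → ℝ} {τ t : ℝ} {ξ : Euc d}

lemma Amat_isHermitian (hsymm : ∀ t x i j, a t x i j = a t x j i) (τ t : ℝ) (ξ : Euc d) :
    (Amat a τ t ξ).IsHermitian := by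
  ext i j
  simp only [conjTranspose_apply, Amat, of_apply, star_trivial]
  exact intervalIntegral.integral_congr fun s _ => hsymm s ξ j i

lemma dotProduct_Amat_mulVec
    (hint : ∀ i j, IntervalIntegrable (fun s => a s ξ i j) volume τ t) (w : Fin d → ℝ) :
    w ⬝ᵥ (Amat a τ t ξ *ᵥ w) = ∫ s in τ..t, ∑ i, ∑ j, a s ξ i j * w i * w j := by
  have hint' : ∀ i j, IntervalIntegrable (fun s => a s ξ i j * w i * w j) volume τ t :=
    fun i j => ((hint i j).mul_const _).mul_const _
  rw [intervalIntegral.integral_finsetSum fun i _ => by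
    simpa only [Finset.sum_fn] using IntervalIntegrable.sum Finset.univ fun j _ => hint' i j]
  refine Finset.sum_congr rfl fun i _ => ?_
  rw [intervalIntegral.integral_finsetSum fun j _ => hint' i j, mulVec, dotProduct,
    Finset.mul_sum]
  refine Finset.sum_congr rfl fun j _ => ?_
  simp only [Amat, of_apply, intervalIntegral.integral_mul_const]
  ring

variable {T lam al : ℝ} {b : ℝ → Euc d → Fin d → ℝ} {c : ℝ → Euc d → ℝ}

lemma Coeffs.intervalIntegrable (hco : Coeffs d T lam al a b c) (hτ : 0 ≤ τ) (hτt : τ ≤ t)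
    (ht : t ≤ T) (ξ : Euc d) (i j : Fin d) :
    IntervalIntegrable (fun s => a s ξ i j) volume τ t := by
  refine (intervalIntegrable_const (c := lam)).mono_fun'
    (hco.meas_a ξ i j).aestronglyMeasurable ?_
  filter_upwards [ae_restrict_mem measurableSet_uIoc] with s hs
  rw [uIoc_of_le hτt] at hs
  exact hco.bdd_a s ⟨hτ.trans hs.1.le, hs.2.trans ht⟩ ξ i j

lemma Coeffs.quadForm_Amat_mem_Icc (hco : Coeffs d T lam al a b c) (hτ : 0 ≤ τ) (hτt : τ ≤ t)
    (ht : t ≤ T) (ξ : Euc d) (w : Fin d → ℝ) :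
    w ⬝ᵥ (Amat a τ t ξ *ᵥ w) ∈ Icc (lam⁻¹ * (t - τ) * (w ⬝ᵥ w)) (lam * (t - τ) * (w ⬝ᵥ w)) := by
  have hint := hco.intervalIntegrable hτ hτt ht ξ
  have hsum : IntervalIntegrable (fun s => ∑ i, ∑ j, a s ξ i j * w i * w j) volume τ t := by
    simpa only [Finset.sum_fn] using IntervalIntegrable.sum Finset.univ fun i _ =>
      IntervalIntegrable.sum Finset.univ fun j _ => ((hint i j).mul_const (w i)).mul_const (w j)
  have hIcc : ∀ s ∈ Icc τ t, s ∈ Icc 0 T := fun s hs => ⟨hτ.trans hs.1, hs.2.trans ht⟩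
  have hw : ‖WithLp.toLp 2 w‖ ^ 2 = w ⬝ᵥ w := by
    rw [EuclideanSpace.real_norm_sq_eq]
    simp only [dotProduct, sq]
  rw [dotProduct_Amat_mulVec hint]
  constructor
  · have := intervalIntegral.integral_mono_on hτt intervalIntegrable_const hsum fun s hs => by
      simpa [hw] using hco.coercive_lower s (hIcc s hs) ξ (WithLp.toLp 2 w)
    simpa [mul_assoc, mul_left_comm] using this
  · have := intervalIntegral.integral_mono_on hτt hsum intervalIntegrable_const fun s hs => by
      simpa [hw] using hco.coercive_upper s (hIcc s hs) ξ (WithLp.toLp 2 w)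
    simpa [mul_assoc, mul_left_comm] using this

lemma Coeffs.inv_pow_mul_heatK_inv_le_Zker (hco : Coeffs d T lam al a b c) (hlam : 0 < lam)
    (hτ : 0 ≤ τ) (hτt : τ < t) (ht : t ≤ T) (x ξ : Euc d) :
    (lam ^ d)⁻¹ * heatK d lam⁻¹ (t - τ) (x - ξ) ≤ Zker a t x τ ξ := by
  have hs : 0 < t - τ := sub_pos.2 hτt
  have hquad := hco.quadForm_Amat_mem_Icc hτ hτt.le ht ξ
  have hZ := rpow_mul_exp_le_gaussK (Amat_isHermitian hco.symm τ t ξ) (by positivity)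
    (by positivity) (fun w => (hquad w).1) (fun w => (hquad w).2) (x - ξ)
  rw [Zker, heatK, ← mul_assoc, ← rpow_two_pi_mul_eq_inv_pow_mul hlam hs.le]
  simpa only [mul_assoc] using hZ

end Parametrix

theorem stmt_16_general (d : ℕ) (T lam al : ℝ) (hlam : 1 < lam)
    (hal : al ∈ Ioo (0 : ℝ) 1)
    (a : ℝ → Euc d → Fin d → Fin d → ℝ) (b : ℝ → Euc d → Fin d → ℝ) (c : ℝ → Euc d → ℝ)
    (hco : Coeffs d T lam al a b c)
    (C : ℝ) (hC : 0 < C)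
    (hJ : ∀ τ t : ℝ, 0 ≤ τ → τ < t → t ≤ T → ∀ x ξ : Euc d,
      |Jker a b c t x τ ξ| ≤ C * (t - τ) ^ (al / 2) * heatK d lam (t - τ) (x - ξ)) :
    ∀ τ t : ℝ, 0 ≤ τ → τ < t → t ≤ T →
      t - τ ≤ min ((2 * C * lam ^ d) ^ (-(2 : ℝ) / al)) T →
      ∀ x ξ : Euc d,
        ‖x - ξ‖ ≤ Real.sqrt (lam * d * Real.log lam / (lam ^ 2 - 1)) * Real.sqrt (t - τ) →
        (2 * lam ^ d)⁻¹ * heatK d lam⁻¹ (t - τ) (x - ξ) ≤ Gpar a b c t x τ ξ := by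
  intro τ t hτ hτt ht hsT x ξ hcone
  have hlam0 : 0 < lam := one_pos.trans hlam
  have hs : 0 < t - τ := sub_pos.2 hτt
  set G := heatK d lam⁻¹ (t - τ) (x - ξ)
  have hZ : (lam ^ d)⁻¹ * G ≤ Zker a t x τ ξ :=
    hco.inv_pow_mul_heatK_inv_le_Zker hlam0 hτ hτt ht x ξ
  have hheat : heatK d lam (t - τ) (x - ξ) ≤ G :=
    heatK_le_heatK_inv hlam0 hs (x - ξ)
      (sq_mul_le_of_le_sqrt_mul_sqrt hlam hs.le (norm_nonneg _) hcone)
  have hsmall : C * (t - τ) ^ (al / 2) ≤ (2 * lam ^ d)⁻¹ := by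
    have := rpow_div_two_le_inv_of_le_rpow (by positivity) hal.1 hs.le
      (hsT.trans (min_le_left _ _))
    calc C * (t - τ) ^ (al / 2) ≤ C * (2 * C * lam ^ d)⁻¹ := by gcongr
      _ = (2 * lam ^ d)⁻¹ := by field_simp
  have hJG : |Jker a b c t x τ ξ| ≤ (2 * lam ^ d)⁻¹ * G :=
    (hJ τ t hτ hτt ht x ξ).trans
      (mul_le_mul hsmall hheat (heatK_nonneg hlam0.le hs.le _) (by positivity))
  have hhalf : (lam ^ d)⁻¹ * G = 2 * ((2 * lam ^ d)⁻¹ * G) := by field_simp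
  rw [Gpar]
  linarith [neg_abs_le (Jker a b c t x τ ξ)]

/-- (Local lower bound for the fundamental solution constructed by the
parametrix method: `Γ ≥ (2λ^d)⁻¹ Γ^{1/λ}` on the parabolic cone
`|x−ξ| ≤ ρ_λ √(t−τ)`, `0 < t−τ ≤ T_λ = min{(2Cλ^d)^{−2/α}, T}`, where `C` is the
constant in the Gaussian estimate for the correction term `J = Γ − Z`). -/
theorem stmt_16 (d : ℕ) (hd : 1 ≤ d) (T lam al : ℝ) (hT : 0 < T) (hlam : 1 < lam)
    (hal : al ∈ Ioo (0 : ℝ) 1)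
    (a : ℝ → Euc d → Fin d → Fin d → ℝ) (b : ℝ → Euc d → Fin d → ℝ) (c : ℝ → Euc d → ℝ)
    (hco : Coeffs d T lam al a b c)
    (C : ℝ) (hC : 0 < C)
    (hJ : ∀ τ t : ℝ, 0 ≤ τ → τ < t → t ≤ T → ∀ x ξ : Euc d,
      |Jker a b c t x τ ξ| ≤ C * (t - τ) ^ (al / 2) * heatK d lam (t - τ) (x - ξ)) :
    ∀ τ t : ℝ, 0 ≤ τ → τ < t → t ≤ T →
      t - τ ≤ min ((2 * C * lam ^ d) ^ (-(2 : ℝ) / al)) T →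
      ∀ x ξ : Euc d,
        ‖x - ξ‖ ≤ Real.sqrt (lam * d * Real.log lam / (lam ^ 2 - 1)) * Real.sqrt (t - τ) →
        (2 * lam ^ d)⁻¹ * heatK d lam⁻¹ (t - τ) (x - ξ) ≤ Gpar a b c t x τ ξ :=
  stmt_16_general d T lam al hlam hal a b c hco C hC hJ

end
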